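/- For every integer n ≥ 0, the total weight of the set T*_n of weighted bicolored Motzkin paths equals Q_n(t,q): ρ(T*_n) = Q_n(t,q) in ℤ[t,q]. -/

import Mathlib

open Finset Polynomial

/-- A step of a bicolored Motzkin path: up, down, straight level, wavy level. -/
inductive MStep where
  | U : MStep
  | D : MStep
  | L : MStep
  | W : MStep
deriving DecidableEq

/-- A weighted bicolored Motzkin path of length `n`: a sequence of steps together
with, for each step, the pair `(b, c)` of exponents of its monomial weight
`t^b q^c`. -/
structure WPath (n : ℕ) where
  step : Fin n → MStep
  wt : Fin n → ℕ × ℕ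

/-- The height increment of a step. -/
def dh : MStep → ℤ
  | MStep.U => 1
  | MStep.D => -1
  | MStep.L => 0
  | MStep.W => 0

/-- The height (of the starting point) of the `j`-th step; `ht μ n` is the final
height. -/
def ht {n : ℕ} (μ : WPath n) (j : ℕ) : ℤ :=
  ∑ k ∈ Finset.range j, if h : k < n then dh (μ.step ⟨k, h⟩) else 0

/-- The underlying path is a Motzkin path: stays weakly above the `x`-axis and
ends on it. -/
def IsMotzkin {n : ℕ} (μ : WPath n) : Prop :=
  (∀ j ≤ n, 0 ≤ ht μ j) ∧ ht μ n = 0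

/-- The weight `ρ(μ)`: the product of the step weights `t^b q^c`, as an element
of `ℤ[t,q]` (realized as `ℤ[q][t]`, `t` the outer variable). -/
noncomputable def rho {n : ℕ} (μ : WPath n) : Polynomial (Polynomial ℤ) :=
  ∏ j : Fin n, Polynomial.C (Polynomial.X ^ (μ.wt j).2) * Polynomial.X ^ (μ.wt j).1

/-- `[m]_q = 1 + q + ⋯ + q^(m-1)` in `ℤ[q]`. -/
noncomputable def qnat (m : ℕ) : Polynomial ℤ := ∑ i ∈ Finset.range m, Polynomial.X ^ i

/-- The `q`-derivative `D` on `ℤ[q][t]` (outer variable `t`, inner variable `q`),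
the `ℤ[q]`-linear operator with `D(t^m) = [m]_q t^(m-1)`. -/
noncomputable def opD (f : Polynomial (Polynomial ℤ)) : Polynomial (Polynomial ℤ) :=
  f.sum fun m c => Polynomial.C (c * qnat m) * Polynomial.X ^ (m - 1)

/-- The operator `U`: multiplication by `t` on `ℤ[q][t]`. -/
noncomputable def opU (f : Polynomial (Polynomial ℤ)) : Polynomial (Polynomial ℤ) :=
  Polynomial.X * f

/-- `R_n(t,q) = (D + DUU)^n 1`. -/
noncomputable def Rpoly (n : ℕ) : Polynomial (Polynomial ℤ) :=
  (fun f => opD f + opD (opU (opU f)))^[n] 1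

/-- `Q_n(t,q) = (D + UDU)^n 1`. -/
noncomputable def Qpoly (n : ℕ) : Polynomial (Polynomial ℤ) :=
  (fun f => opD f + opU (opD (opU f)))^[n] 1

/-- `μ ∈ T*_n`: a weighted bicolored Motzkin path with no wavy level step on the
`x`-axis, whose weights satisfy, at each step of height `h`: up steps carry `q^c`
with `c ≤ h` or `t²q^c` with `2h+1 ≤ c ≤ 3h+1`; straight level steps carry `tq^c`
with `h ≤ c ≤ 2h`; wavy level steps (at height `h ≥ 1`) carry `tq^c` with
`h ≤ c ≤ 2h-1`; down steps at height `h+1` carry `q^c` with `c ≤ h`. -/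
def Tscond {n : ℕ} (μ : WPath n) : Prop :=
  IsMotzkin μ ∧ ∀ j : Fin n,
    (μ.step j = MStep.U →
      ((μ.wt j).1 = 0 ∧ ((μ.wt j).2 : ℤ) ≤ ht μ j) ∨
      ((μ.wt j).1 = 2 ∧ 2 * ht μ j + 1 ≤ ((μ.wt j).2 : ℤ) ∧
        ((μ.wt j).2 : ℤ) ≤ 3 * ht μ j + 1)) ∧
    (μ.step j = MStep.L →
      (μ.wt j).1 = 1 ∧ ht μ j ≤ ((μ.wt j).2 : ℤ) ∧ ((μ.wt j).2 : ℤ) ≤ 2 * ht μ j) ∧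
    (μ.step j = MStep.W →
      1 ≤ ht μ j ∧ (μ.wt j).1 = 1 ∧ ht μ j ≤ ((μ.wt j).2 : ℤ) ∧
        ((μ.wt j).2 : ℤ) ≤ 2 * ht μ j - 1) ∧
    (μ.step j = MStep.D →
      (μ.wt j).1 = 0 ∧ ((μ.wt j).2 : ℤ) ≤ ht μ j - 1)

/-!
Cutting a path after its first step shows that the total weight `W n h` of the admissible
paths of length `n` from height `h` down to the axis satisfies
`W (n+1) h = [h+1](1 + q^(2h+1) t²) W n (h+1) + q^h ([h+1] + [h]) t W n h + [h] W n (h-1)`.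
On the operator side `D U = 1 + q U D`, hence `D^(h+1) U = q^(h+1) U D^(h+1) + [h+1] D^h`, and so
`D^h (D + U D U) = (1 + q^(2h+1) U²) D^(h+1) + q^h ([h+1] + [h]) U D^h + [h]² D^(h-1)`.
After multiplying the first recursion by `[h]!` the two agree, so `[h]! W n h = D^h Q_n` by
induction on `n`, and `h = 0` is the theorem.
-/

lemma qnat_zero : qnat 0 = 0 := by simp [qnat]

lemma qnat_succ (m : ℕ) : qnat (m + 1) = qnat m + X ^ m := sum_range_succ _ _

lemma qnat_succ' (m : ℕ) : qnat (m + 1) = 1 + X * qnat m := by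
  simp [qnat, sum_range_succ', mul_sum, pow_succ', add_comm]

lemma sum_Ico_X_pow (a m : ℕ) : ∑ c ∈ Ico a (a + m), (X : Polynomial ℤ) ^ c = X ^ a * qnat m := by
  simp [sum_Ico_eq_sum_range, qnat, mul_sum, pow_add]

noncomputable def qfactorial : ℕ → Polynomial ℤ
  | 0 => 1
  | h + 1 => qfactorial h * qnat (h + 1)

noncomputable def qDeriv : Module.End (Polynomial ℤ) (Polynomial (Polynomial ℤ)) :=
  lsum fun m => (monomial (m - 1)).comp (LinearMap.mulRight (Polynomial ℤ) (qnat m))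

lemma qDeriv_apply (f : Polynomial (Polynomial ℤ)) : qDeriv f = opD f := by
  simp [qDeriv, opD, ← C_mul_X_pow_eq_monomial]

lemma qDeriv_monomial (m : ℕ) (c : Polynomial ℤ) :
    qDeriv (monomial m c) = monomial (m - 1) (c * qnat m) := by
  simp [qDeriv]

lemma qDeriv_one : qDeriv 1 = 0 := by
  simpa [qnat_zero] using qDeriv_monomial 0 1

lemma qDeriv_C_mul (a : Polynomial ℤ) (f : Polynomial (Polynomial ℤ)) :
    qDeriv (C a * f) = C a * qDeriv f := by
  rw [← smul_eq_C_mul, ← smul_eq_C_mul, map_smul]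

lemma qDeriv_X_mul (f : Polynomial (Polynomial ℤ)) :
    qDeriv (X * f) = f + C X * X * qDeriv f := by
  induction f using Polynomial.induction_on' with
  | add f g hf hg => simp only [mul_add, map_add, hf, hg]; ring
  | monomial m c =>
    rw [X_mul_monomial, qDeriv_monomial, qDeriv_monomial, Nat.add_sub_cancel]
    cases m with
    | zero => simp [qnat_zero, qnat_succ]
    | succ k =>
      rw [mul_assoc, X_mul_monomial, Nat.sub_add_cancel (by omega), C_mul_monomial,
        ← map_add, qnat_succ' (k + 1)]
      ring_nf

lemma qDeriv_pow_succ_X_mul (k : ℕ) (f : Polynomial (Polynomial ℤ)) :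
    (qDeriv ^ (k + 1)) (X * f) =
      C (X ^ (k + 1)) * X * (qDeriv ^ (k + 1)) f + C (qnat (k + 1)) * (qDeriv ^ k) f := by
  induction k with
  | zero => simp [qDeriv_X_mul, qnat_succ, qnat_zero, add_comm]
  | succ k ih =>
    rw [pow_succ', Module.End.mul_apply, ih, map_add, mul_assoc, qDeriv_C_mul, qDeriv_C_mul,
      qDeriv_X_mul, ← Module.End.mul_apply, ← pow_succ', ← Module.End.mul_apply, ← pow_succ',
      qnat_succ (k + 1)]
    simp only [map_add, map_pow]
    ring

lemma qDeriv_pow_apply_qDeriv (k : ℕ) (f : Polynomial (Polynomial ℤ)) :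
    (qDeriv ^ k) (qDeriv f) = (qDeriv ^ (k + 1)) f := by
  rw [pow_succ, Module.End.mul_apply]

lemma Qpoly_succ (n : ℕ) : Qpoly (n + 1) = qDeriv (Qpoly n) + X * qDeriv (X * Qpoly n) := by
  rw [Qpoly, Function.iterate_succ_apply', ← Qpoly, qDeriv_apply, qDeriv_apply, opU, opU]

instance : Fintype MStep :=
  ⟨{MStep.U, MStep.D, MStep.L, MStep.W}, fun s => by cases s <;> simp⟩

instance {n : ℕ} : DecidableEq (WPath n) := fun μ ν =>
  decidable_of_iff (μ.step = ν.step ∧ μ.wt = ν.wt) (by cases μ; cases ν; simp)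

namespace WPath

variable {n : ℕ}

def nil : WPath 0 := ⟨Fin.elim0, Fin.elim0⟩

lemma eq_nil (μ : WPath 0) : μ = nil := by
  cases μ
  congr <;> funext j <;> exact j.elim0

def cons (s : MStep) (w : ℕ × ℕ) (ν : WPath n) : WPath (n + 1) :=
  ⟨Fin.cons s ν.step, Fin.cons w ν.wt⟩

def tail (μ : WPath (n + 1)) : WPath n :=
  ⟨Fin.tail μ.step, Fin.tail μ.wt⟩

lemma cons_head_tail (μ : WPath (n + 1)) : cons (μ.step 0) (μ.wt 0) μ.tail = μ := by
  cases μ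
  simp [cons, tail, Fin.cons_self_tail]

lemma cons_inj {s s' : MStep} {w w' : ℕ × ℕ} {ν ν' : WPath n} :
    cons s w ν = cons s' w' ν' ↔ s = s' ∧ w = w' ∧ ν = ν' := by
  cases ν; cases ν'
  simp only [cons, mk.injEq, Fin.cons_inj]
  tauto

@[simp]
lemma cons_step_zero (s : MStep) (w : ℕ × ℕ) (ν : WPath n) : (cons s w ν).step 0 = s :=
  rfl

@[simp]
lemma cons_wt_zero (s : MStep) (w : ℕ × ℕ) (ν : WPath n) : (cons s w ν).wt 0 = w :=
  rfl

@[simp]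
lemma cons_step_succ (s : MStep) (w : ℕ × ℕ) (ν : WPath n) (i : Fin n) :
    (cons s w ν).step i.succ = ν.step i :=
  rfl

@[simp]
lemma cons_wt_succ (s : MStep) (w : ℕ × ℕ) (ν : WPath n) (i : Fin n) :
    (cons s w ν).wt i.succ = ν.wt i :=
  rfl

end WPath

lemma ht_zero {n : ℕ} (μ : WPath n) : ht μ 0 = 0 := by simp [ht]

lemma ht_cons {n : ℕ} (s : MStep) (w : ℕ × ℕ) (ν : WPath n) (j : ℕ) :
    ht (WPath.cons s w ν) (j + 1) = dh s + ht ν j := by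
  simp only [ht, sum_range_succ', Nat.add_lt_add_iff_right, Nat.zero_lt_succ, dite_true]
  exact add_comm _ _

lemma rho_cons {n : ℕ} (s : MStep) (w : ℕ × ℕ) (ν : WPath n) :
    rho (WPath.cons s w ν) = C (X ^ w.2) * X ^ w.1 * rho ν := by
  simp only [rho, Fin.prod_univ_succ, WPath.cons_wt_zero, WPath.cons_wt_succ]

def AdmissibleStep : MStep → ℤ → ℕ × ℕ → Prop
  | MStep.U, h, w => (w.1 = 0 ∧ (w.2 : ℤ) ≤ h) ∨
      (w.1 = 2 ∧ 2 * h + 1 ≤ (w.2 : ℤ) ∧ (w.2 : ℤ) ≤ 3 * h + 1)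
  | MStep.L, h, w => w.1 = 1 ∧ h ≤ (w.2 : ℤ) ∧ (w.2 : ℤ) ≤ 2 * h
  | MStep.W, h, w => 1 ≤ h ∧ w.1 = 1 ∧ h ≤ (w.2 : ℤ) ∧ (w.2 : ℤ) ≤ 2 * h - 1
  | MStep.D, h, w => w.1 = 0 ∧ (w.2 : ℤ) ≤ h - 1

def admissibleWeights : MStep → ℕ → Finset (ℕ × ℕ)
  | MStep.U, h => {0} ×ˢ range (h + 1) ∪ {2} ×ˢ Ico (2 * h + 1) (3 * h + 2)
  | MStep.L, h => {1} ×ˢ Ico h (2 * h + 1)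
  | MStep.W, h => {1} ×ˢ Ico h (2 * h)
  | MStep.D, h => {0} ×ˢ range h

lemma mem_admissibleWeights {s : MStep} {h : ℕ} {w : ℕ × ℕ} :
    w ∈ admissibleWeights s h ↔ AdmissibleStep s h w := by
  obtain ⟨b, c⟩ := w
  cases s <;> simp only [admissibleWeights, AdmissibleStep, mem_union, mem_product,
    mem_singleton, mem_range, mem_Ico] <;> omega

def nextHeight : MStep → ℕ → ℕ
  | MStep.U, h => h + 1
  | MStep.D, h => h - 1
  | _, h => h

lemma nextHeight_eq {s : MStep} {h : ℕ} {w : ℕ × ℕ} (hw : AdmissibleStep s h w) :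
    (nextHeight s h : ℤ) = h + dh s := by
  cases s <;> simp only [nextHeight, dh, AdmissibleStep] at hw ⊢ <;> omega

def AdmissibleFrom {n : ℕ} (H : ℕ) (μ : WPath n) : Prop :=
  (∀ j ≤ n, 0 ≤ (H : ℤ) + ht μ j) ∧ (H : ℤ) + ht μ n = 0 ∧
    ∀ j : Fin n, AdmissibleStep (μ.step j) (H + ht μ j) (μ.wt j)

lemma admissibleFrom_nil_iff {H : ℕ} : AdmissibleFrom H WPath.nil ↔ H = 0 := by
  simp [AdmissibleFrom, ht_zero]

lemma admissibleFrom_cons_iff {n H : ℕ} {s : MStep} {w : ℕ × ℕ} {ν : WPath n} :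
    AdmissibleFrom H (WPath.cons s w ν) ↔
      AdmissibleStep s H w ∧ AdmissibleFrom (nextHeight s H) ν := by
  have shift (hw : AdmissibleStep s H w) (j : ℕ) :
      (H : ℤ) + ht (WPath.cons s w ν) (j + 1) = nextHeight s H + ht ν j := by
    rw [ht_cons, nextHeight_eq hw, add_assoc]
  constructor
  · rintro ⟨hpos, hend, hstep⟩
    have hw : AdmissibleStep s H w := by simpa [ht_zero] using hstep 0
    refine ⟨hw, fun j hj => ?_, ?_, fun j => ?_⟩
    · simpa only [shift hw] using hpos (j + 1) (by omega)
    · simpa only [shift hw] using hend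
    · simpa only [Fin.val_succ, shift hw, WPath.cons_step_succ, WPath.cons_wt_succ]
        using hstep j.succ
  · rintro ⟨hw, hpos, hend, hstep⟩
    refine ⟨fun j hj => ?_, ?_, fun j => ?_⟩
    · cases j with
      | zero => simp [ht_zero]
      | succ j => simpa only [shift hw] using hpos j (by omega)
    · simpa only [shift hw] using hend
    · cases j using Fin.cases with
      | zero => simpa [ht_zero] using hw
      | succ j =>
        simpa only [Fin.val_succ, shift hw, WPath.cons_step_succ, WPath.cons_wt_succ]
          using hstep j

lemma admissibleFrom_zero_iff {n : ℕ} (μ : WPath n) : AdmissibleFrom 0 μ ↔ Tscond μ := by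
  simp only [AdmissibleFrom, Tscond, IsMotzkin, Nat.cast_zero, zero_add, and_assoc]
  refine and_congr_right fun _ => and_congr_right fun _ => forall_congr' fun j => ?_
  cases μ.step j <;> simp [AdmissibleStep]

def admissiblePaths : (n : ℕ) → ℕ → Finset (WPath n)
  | 0, H => if H = 0 then {WPath.nil} else ∅
  | n + 1, H =>
    (univ.sigma fun s => admissibleWeights s H ×ˢ admissiblePaths n (nextHeight s H)).image
      fun p => WPath.cons p.1 p.2.1 p.2.2

lemma mem_admissiblePaths {n H : ℕ} {μ : WPath n} :
    μ ∈ admissiblePaths n H ↔ AdmissibleFrom H μ := by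
  induction n generalizing H with
  | zero =>
    rw [μ.eq_nil, admissibleFrom_nil_iff]
    by_cases hH : H = 0 <;> simp [admissiblePaths, hH]
  | succ n ih =>
    simp only [admissiblePaths, mem_image, mem_sigma, mem_univ, true_and, mem_product,
      Sigma.exists]
    constructor
    · rintro ⟨s, ⟨w, ν⟩, ⟨hw, hν⟩, rfl⟩
      exact admissibleFrom_cons_iff.2 ⟨mem_admissibleWeights.1 hw, ih.1 hν⟩
    · intro hμ
      rw [← μ.cons_head_tail] at hμ
      obtain ⟨hw, hν⟩ := admissibleFrom_cons_iff.1 hμ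
      exact ⟨_, (_, _), ⟨mem_admissibleWeights.2 hw, ih.2 hν⟩, μ.cons_head_tail⟩

noncomputable def pathWeight (n H : ℕ) : Polynomial (Polynomial ℤ) :=
  ∑ μ ∈ admissiblePaths n H, rho μ

noncomputable def stepWeight (s : MStep) (H : ℕ) : Polynomial (Polynomial ℤ) :=
  ∑ w ∈ admissibleWeights s H, C (X ^ w.2) * X ^ w.1

lemma pathWeight_zero (H : ℕ) : pathWeight 0 H = if H = 0 then 1 else 0 := by
  by_cases hH : H = 0 <;> simp [pathWeight, admissiblePaths, hH, rho]

lemma pathWeight_succ_eq_sum (n H : ℕ) :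
    pathWeight (n + 1) H = ∑ s, stepWeight s H * pathWeight n (nextHeight s H) := by
  rw [pathWeight, admissiblePaths, sum_image, sum_sigma]
  · refine sum_congr rfl fun s _ => ?_
    simp only [sum_product, stepWeight, pathWeight, sum_mul_sum, rho_cons]
  · rintro ⟨s, w, ν⟩ - ⟨s', w', ν'⟩ - h
    obtain ⟨rfl, rfl, rfl⟩ := WPath.cons_inj.1 h
    rfl

lemma stepWeight_U (H : ℕ) :
    stepWeight MStep.U H = C (qnat (H + 1)) + C (X ^ (2 * H + 1) * qnat (H + 1)) * X ^ 2 := by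
  rw [stepWeight, admissibleWeights, sum_union (by simp [disjoint_left]),
    show 3 * H + 2 = 2 * H + 1 + (H + 1) by ring]
  simp only [sum_product, sum_singleton, pow_zero, mul_one, ← sum_mul, ← map_sum, qnat,
    sum_Ico_X_pow]

lemma stepWeight_D (H : ℕ) : stepWeight MStep.D H = C (qnat H) := by
  simp only [stepWeight, admissibleWeights, sum_product, sum_singleton, pow_zero, mul_one,
    ← map_sum, qnat]

lemma stepWeight_L (H : ℕ) : stepWeight MStep.L H = C (X ^ H * qnat (H + 1)) * X := by
  rw [stepWeight, admissibleWeights, show 2 * H + 1 = H + (H + 1) by ring]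
  simp only [sum_product, sum_singleton, pow_one, ← sum_mul, ← map_sum, sum_Ico_X_pow]

lemma stepWeight_W (H : ℕ) : stepWeight MStep.W H = C (X ^ H * qnat H) * X := by
  rw [stepWeight, admissibleWeights, two_mul]
  simp only [sum_product, sum_singleton, pow_one, ← sum_mul, ← map_sum, sum_Ico_X_pow]

lemma pathWeight_succ (n H : ℕ) :
    pathWeight (n + 1) H =
      (C (qnat (H + 1)) + C (X ^ (2 * H + 1) * qnat (H + 1)) * X ^ 2) * pathWeight n (H + 1)
      + C (X ^ H * (qnat (H + 1) + qnat H)) * X * pathWeight n H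
      + C (qnat H) * pathWeight n (H - 1) := by
  rw [pathWeight_succ_eq_sum, show (univ : Finset MStep) = {MStep.U, MStep.D, MStep.L, MStep.W}
    from rfl]
  simp only [mem_insert, mem_singleton, reduceCtorEq, or_self, not_false_eq_true, sum_insert,
    sum_singleton, stepWeight_U, stepWeight_D, stepWeight_L, stepWeight_W, nextHeight]
  simp only [map_mul, map_add]
  ring

lemma qfactorial_mul_pathWeight (n h : ℕ) :
    C (qfactorial h) * pathWeight n h = (qDeriv ^ h) (Qpoly n) := by
  induction n generalizing h with
  | zero =>
    cases h with
    | zero => simp [pathWeight_zero, qfactorial, Qpoly]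
    | succ h => simp [pathWeight_zero, Qpoly, pow_succ, qDeriv_one]
  | succ n ih =>
    rw [pathWeight_succ, Qpoly_succ]
    cases h with
    | zero =>
      have ih₀ : pathWeight n 0 = Qpoly n := by simpa [qfactorial] using ih 0
      have ih₁ : pathWeight n 1 = qDeriv (Qpoly n) := by
        simpa [qfactorial, qnat_succ, qnat_zero] using ih 1
      simp only [pow_zero, Module.End.one_apply, qDeriv_X_mul, ih₀, ih₁, qfactorial, qnat_succ,
        qnat_zero, zero_add, mul_zero, pow_one, mul_one, add_zero, one_mul, map_one, map_zero,
        zero_mul]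
      ring
    | succ k =>
      simp only [map_add, qDeriv_pow_apply_qDeriv, qDeriv_pow_succ_X_mul]
      rw [← ih, ← ih, ← ih]
      simp only [qfactorial, map_mul, map_add, map_pow, Nat.add_sub_cancel]
      ring

/-- Proposition 2.3: for `n ≥ 0`, `ρ(T*_n) = Q_n(t,q)` in `ℤ[t,q]`. -/
theorem statement11 (n : ℕ) :
    (∑ᶠ μ ∈ {μ : WPath n | Tscond μ}, rho μ) = Qpoly n := by
  have hset : {μ : WPath n | Tscond μ} = ↑(admissiblePaths n 0) := by
    ext μ
    simp [mem_admissiblePaths, admissibleFrom_zero_iff]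
  rw [hset, finsum_mem_coe_finset, ← pathWeight]
  simpa [qfactorial] using qfactorial_mul_pathWeight n 0
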